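/- arXiv:1812.11246 — 3 statements merged into one kernel-verified Lean document; each statement's English description precedes it below -/
import Mathlib

section
/- Let {a_t} be strictly stationary random variables with ‖a‖_{φ_r} := inf{c > 0 : E[exp(|a_t/c|^r)] ≤ 2} < ∞ for some r > 1, let {ℱ_t} be sigma-fields, and define M_n = ∏_{t=1}^n e^{a_t}/E[e^{a_t}|ℱ_t]. Then for every p ∈ (1, ∞) and b ∈ (1, ∞): E[M_n^p]^{1/p} ≤ ( exp((4pn‖a‖_{φ_r})^{r/(r−1)} b^{1/(r−1)}) + (b/(b−1))·2^{1/b} )^{1/p}. Consequently log E[M_n^p] grows only algebraically (like n^{r/(r−1)}) rather than exponentially in n. -/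
/-!
Conditional Jensen gives `E[e^{a_t} | ℱ_t] ≥ exp (-E[|a_t| | ℱ_t])`, so
`M_n ≤ exp (∑_t (|a_t| + E[|a_t| | ℱ_t]))`. By convexity of `exp`, `E[M_n^p]` is at most the
average over `t` of `E[exp (pn (|a_t| + E[|a_t| | ℱ_t]))]`, and by AM-GM and conditional Jensen
again each of these is at most `E[exp (2pn |a_t|)] = E[exp (2pn |a_0|)]` (stationarity). Young's
inequality `2pn |x| ≤ (|x| / c)^r + (2pnc)^{r/(r-1)}` with `c = ‖a_0‖_{φ_r}` bounds the latter by
`2 exp ((2pnc)^{r/(r-1)})`, which is below the claimed bound since `2e^C ≤ e^{2C} + 1`.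
-/

open MeasureTheory Filter

/-- The `φ_r`-Orlicz (Luxemburg) norm with threshold 2: `inf{c > 0 : E[exp(|f/c|^r)] ≤ 2}`. -/
noncomputable def orliczNorm {Ω : Type*} [MeasurableSpace Ω] (μ : Measure Ω) (r : ℝ)
    (f : Ω → ℝ) : ℝ :=
  sInf {c : ℝ | 0 < c ∧ ∫ ω, Real.exp ((|f ω| / c) ^ r) ∂μ ≤ 2}

open Real Finset ProbabilityTheory

lemma mul_le_rpow_add_rpow_conjExponent {κ y r : ℝ} (hκ : 0 ≤ κ) (hy : 0 ≤ y) (hr : 1 < r) :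
    κ * y ≤ y ^ r + κ ^ (r / (r - 1)) := by
  have hrq := Real.HolderConjugate.conjExponent hr
  have hq : 1 ≤ r / (r - 1) := (one_le_div (by linarith)).2 (by linarith)
  calc κ * y = y * κ := mul_comm _ _
    _ ≤ y ^ r / r + κ ^ (r / (r - 1)) / (r / (r - 1)) := young_inequality_of_nonneg hy hκ hrq
    _ ≤ y ^ r + κ ^ (r / (r - 1)) := by
      gcongr
      · exact div_le_self (by positivity) hr.le
      · exact div_le_self (by positivity) hq

lemma exp_mul_abs_le_exp_mul_exp_rpow {κ c r : ℝ} (hκ : 0 ≤ κ) (hc : 0 < c) (hr : 1 < r)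
    (x : ℝ) : exp (κ * |x|) ≤ exp ((κ * c) ^ (r / (r - 1))) * exp ((|x| / c) ^ r) := by
  rw [← exp_add, add_comm]
  gcongr
  calc κ * |x| = (κ * c) * (|x| / c) := by field_simp
    _ ≤ _ := mul_le_rpow_add_rpow_conjExponent (by positivity) (by positivity) hr

lemma exp_mul_add_le_add_exp_two_mul (κ y z : ℝ) :
    exp (κ * (y + z)) ≤ (exp (2 * κ * y) + exp (2 * κ * z)) / 2 := by
  have h := two_mul_le_add_sq (exp (κ * y)) (exp (κ * z))
  rw [mul_assoc, ← exp_add, ← exp_nat_mul, ← exp_nat_mul] at h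
  push_cast at h
  rw [mul_add, mul_assoc, mul_assoc]
  linarith

lemma exp_sum_le_sum_exp_card_mul {ι : Type*} {s : Finset ι} (hs : s.Nonempty) (x : ι → ℝ) :
    exp (∑ t ∈ s, x t) ≤ ∑ t ∈ s, (1 / (#s : ℝ)) * exp (#s * x t) := by
  have hcard : (0 : ℝ) < #s := by exact_mod_cast hs.card_pos
  have hw : ∑ _t ∈ s, 1 / (#s : ℝ) = 1 := by
    rw [sum_const, nsmul_eq_mul]; field_simp
  have := convexOn_exp.map_sum_le (t := s) (w := fun _ => 1 / (#s : ℝ))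
    (p := fun t => #s * x t) (fun _ _ => by positivity) hw (fun _ _ => Set.mem_univ _)
  simp only [smul_eq_mul] at this
  refine le_of_eq_of_le ?_ this
  congr 1
  exact sum_congr rfl fun t _ => by field_simp

lemma two_mul_exp_rpow_le {x r b q : ℝ} (hx : 0 ≤ x) (hr : 1 < r) (hb : 1 ≤ b) (hq : 1 ≤ q) :
    2 * exp (x ^ (r / (r - 1))) ≤ exp ((2 * x) ^ (r / (r - 1)) * b ^ (1 / (r - 1))) + q := by
  set C := x ^ (r / (r - 1))
  have hC : 0 ≤ C := by positivity
  have hexponent : 2 * C ≤ (2 * x) ^ (r / (r - 1)) * b ^ (1 / (r - 1)) := by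
    have h2 : (2 : ℝ) ≤ 2 ^ (r / (r - 1)) := by
      simpa using rpow_le_rpow_of_exponent_le one_le_two
        ((one_le_div (by linarith : (0 : ℝ) < r - 1)).2 (by linarith))
    rw [mul_rpow zero_le_two hx]
    calc 2 * C ≤ 2 ^ (r / (r - 1)) * C := by gcongr
      _ ≤ 2 ^ (r / (r - 1)) * C * b ^ (1 / (r - 1)) :=
        le_mul_of_one_le_right (by positivity) (one_le_rpow hb (by bound))
  have hamgm : 2 * exp C ≤ exp (2 * C) + 1 := by
    rw [two_mul C, exp_add]; nlinarith [sq_nonneg (exp C - 1)]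
  linarith [exp_le_exp.2 hexponent]

section Orlicz

variable {Ω : Type*} [MeasurableSpace Ω] {μ : Measure Ω} {f : Ω → ℝ} {κ r : ℝ}

lemma integrable_exp_rpow_div_orliczNorm (hf : Measurable f) (hr : 0 ≤ r)
    (hmem : orliczNorm μ r f ∈ {c : ℝ | 0 < c ∧ ∫ ω, exp ((|f ω| / c) ^ r) ∂μ ≤ 2}) :
    Integrable (fun ω => exp ((|f ω| / orliczNorm μ r f) ^ r)) μ := by
  set c := orliczNorm μ r f
  have hc : 0 < c := hmem.1
  by_contra hnot
  -- otherwise the integral at `c / 2` is the junk value `0`, so `c / 2` is admissible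
  have hhalf : c / 2 ∈ {c : ℝ | 0 < c ∧ ∫ ω, exp ((|f ω| / c) ^ r) ∂μ ≤ 2} := by
    refine ⟨half_pos hc, le_of_eq_of_le (integral_undef fun hint => hnot ?_) zero_le_two⟩
    refine hint.mono' (by fun_prop) (ae_of_all _ fun ω => ?_)
    rw [norm_of_nonneg (exp_nonneg _)]
    gcongr
    exact half_le_self hc.le
  have : c ≤ c / 2 := csInf_le ⟨0, fun x hx => hx.1.le⟩ hhalf
  linarith

lemma integrable_exp_mul_abs_of_mem_orliczNorm (hf : Measurable f) (hκ : 0 ≤ κ) (hr : 1 < r)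
    (hmem : orliczNorm μ r f ∈ {c : ℝ | 0 < c ∧ ∫ ω, exp ((|f ω| / c) ^ r) ∂μ ≤ 2}) :
    Integrable (fun ω => exp (κ * |f ω|)) μ :=
  ((integrable_exp_rpow_div_orliczNorm hf (by linarith) hmem).const_mul _).mono' (by fun_prop)
    (ae_of_all _ fun ω => by
      rw [norm_of_nonneg (exp_nonneg _)]
      exact exp_mul_abs_le_exp_mul_exp_rpow hκ hmem.1 hr (f ω))

lemma integral_exp_mul_abs_le_of_mem_orliczNorm (hf : Measurable f) (hκ : 0 ≤ κ) (hr : 1 < r)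
    (hmem : orliczNorm μ r f ∈ {c : ℝ | 0 < c ∧ ∫ ω, exp ((|f ω| / c) ^ r) ∂μ ≤ 2}) :
    ∫ ω, exp (κ * |f ω|) ∂μ ≤ 2 * exp ((κ * orliczNorm μ r f) ^ (r / (r - 1))) := by
  have hφ := integrable_exp_rpow_div_orliczNorm hf (by linarith) hmem
  calc ∫ ω, exp (κ * |f ω|) ∂μ
      ≤ ∫ ω, exp ((κ * orliczNorm μ r f) ^ (r / (r - 1))) *
          exp ((|f ω| / orliczNorm μ r f) ^ r) ∂μ :=
        integral_mono (integrable_exp_mul_abs_of_mem_orliczNorm hf hκ hr hmem) (hφ.const_mul _)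
          fun ω => exp_mul_abs_le_exp_mul_exp_rpow hκ hmem.1 hr (f ω)
    _ ≤ 2 * exp ((κ * orliczNorm μ r f) ^ (r / (r - 1))) := by
        rw [integral_const_mul, mul_comm]
        gcongr
        exact hmem.2

lemma integrable_of_integrable_exp_abs (hf : AEStronglyMeasurable f μ)
    (h : Integrable (fun ω => exp |f ω|) μ) : Integrable f μ :=
  h.mono' hf (ae_of_all _ fun ω => by
    simpa using (le_add_of_nonneg_right zero_le_one).trans (add_one_le_exp |f ω|))

lemma integrable_exp_of_integrable_exp_abs (hf : AEStronglyMeasurable f μ)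
    (h : Integrable (fun ω => exp |f ω|) μ) : Integrable (fun ω => exp (f ω)) μ :=
  h.mono' (by fun_prop) (ae_of_all _ fun ω => by simpa using le_abs_self (f ω))

end Orlicz

section CondExp

variable {Ω : Type*} {m m0 : MeasurableSpace Ω} {μ : Measure Ω} [IsFiniteMeasure μ]
  {Y : Ω → ℝ}

lemma exp_mul_condExp_le_condExp_exp (hm : m ≤ m0) (κ : ℝ) (hY : Integrable Y μ)
    (hκY : Integrable (fun ω => exp (κ * Y ω)) μ) :
    ∀ᵐ ω ∂μ, exp (κ * μ[Y|m] ω) ≤ μ[fun ω => exp (κ * Y ω)|m] ω := by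
  have hsmul : μ[fun ω => κ * Y ω|m] =ᵐ[μ] fun ω => κ * μ[Y|m] ω := condExp_smul κ Y m
  filter_upwards [convexOn_exp.map_condExp_le_univ hm continuous_exp.lowerSemicontinuous
    (hY.const_mul κ) hκY, hsmul] with ω hJensen hsmulω
  rw [Function.comp_apply, hsmulω] at hJensen
  exact hJensen

lemma integrable_exp_mul_condExp (hm : m ≤ m0) (κ : ℝ) (hY : Integrable Y μ)
    (hκY : Integrable (fun ω => exp (κ * Y ω)) μ) :
    Integrable (fun ω => exp (κ * μ[Y|m] ω)) μ := by
  refine (integrable_condExp (m := m) (f := fun ω => exp (κ * Y ω))).mono' ?_ ?_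
  · exact (continuous_exp.comp_aestronglyMeasurable
      ((stronglyMeasurable_condExp.mono hm).aestronglyMeasurable.const_mul κ))
  · filter_upwards [exp_mul_condExp_le_condExp_exp hm κ hY hκY] with ω hω
    rwa [norm_of_nonneg (exp_nonneg _)]

lemma integral_exp_mul_condExp_le (hm : m ≤ m0) (κ : ℝ) (hY : Integrable Y μ)
    (hκY : Integrable (fun ω => exp (κ * Y ω)) μ) :
    ∫ ω, exp (κ * μ[Y|m] ω) ∂μ ≤ ∫ ω, exp (κ * Y ω) ∂μ :=
  (integral_mono_ae (integrable_exp_mul_condExp hm κ hY hκY) integrable_condExp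
    (exp_mul_condExp_le_condExp_exp hm κ hY hκY)).trans_eq (integral_condExp hm)

lemma integrable_exp_mul_add_condExp (hm : m ≤ m0) (κ : ℝ) (hY : Integrable Y μ)
    (hκY : Integrable (fun ω => exp (2 * κ * Y ω)) μ) :
    Integrable (fun ω => exp (κ * (Y ω + μ[Y|m] ω))) μ := by
  refine ((hκY.add (integrable_exp_mul_condExp hm _ hY hκY)).div_const 2).mono' ?_
    (ae_of_all _ fun ω => ?_)
  · exact continuous_exp.comp_aestronglyMeasurable
      ((hY.1.add (stronglyMeasurable_condExp.mono hm).aestronglyMeasurable).const_mul κ)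
  · rw [norm_of_nonneg (exp_nonneg _)]
    exact exp_mul_add_le_add_exp_two_mul κ _ _

lemma integral_exp_mul_add_condExp_le (hm : m ≤ m0) (κ : ℝ) (hY : Integrable Y μ)
    (hκY : Integrable (fun ω => exp (2 * κ * Y ω)) μ) :
    ∫ ω, exp (κ * (Y ω + μ[Y|m] ω)) ∂μ ≤ ∫ ω, exp (2 * κ * Y ω) ∂μ := by
  have hZ := integrable_exp_mul_condExp hm _ hY hκY
  calc ∫ ω, exp (κ * (Y ω + μ[Y|m] ω)) ∂μ
      ≤ ∫ ω, (exp (2 * κ * Y ω) + exp (2 * κ * μ[Y|m] ω)) / 2 ∂μ :=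
        integral_mono (integrable_exp_mul_add_condExp hm κ hY hκY) ((hκY.add hZ).div_const 2)
          fun ω => exp_mul_add_le_add_exp_two_mul κ _ _
    _ = ((∫ ω, exp (2 * κ * Y ω) ∂μ) + ∫ ω, exp (2 * κ * μ[Y|m] ω) ∂μ) / 2 := by
        rw [integral_div, integral_add hκY hZ]
    _ ≤ ∫ ω, exp (2 * κ * Y ω) ∂μ := by
        linarith [integral_exp_mul_condExp_le hm _ hY hκY]

lemma exp_neg_condExp_abs_le_condExp_exp (hm : m ≤ m0) (hY : Integrable Y μ)
    (heY : Integrable (fun ω => exp (Y ω)) μ) :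
    ∀ᵐ ω ∂μ, exp (-μ[fun ω => |Y ω| | m] ω) ≤ μ[fun ω => exp (Y ω)|m] ω := by
  have hneg : Integrable (fun ω => exp (-1 * |Y ω|)) μ :=
    (integrable_const 1).mono' (continuous_exp.comp_aestronglyMeasurable
      (hY.1.norm.const_mul (-1))) (ae_of_all _ fun ω => by simp)
  filter_upwards [exp_mul_condExp_le_condExp_exp hm (-1) hY.abs hneg,
    condExp_mono hneg heY (ae_of_all _ fun ω => exp_le_exp.2 (by simp [neg_abs_le]))]
    with ω hJensen hmono
  simpa using hJensen.trans hmono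

end CondExp

lemma identDistrib_of_map_shift_eq {Ω β : Type*} [MeasurableSpace Ω] [MeasurableSpace β]
    {μ : Measure Ω} {a : ℕ → Ω → β} (ha : ∀ t, Measurable (a t))
    (hstat : ∀ t : ℕ, Measure.map (fun ω => (fun k => a (k + t) ω : ℕ → β)) μ =
      Measure.map (fun ω => (fun k => a k ω : ℕ → β)) μ) (t : ℕ) :
    IdentDistrib (a t) (a 0) μ μ := by
  have hpath : IdentDistrib (fun ω k => a (k + t) ω) (fun ω k => a k ω) μ μ :=
    ⟨(measurable_pi_lambda _ fun k => ha (k + t)).aemeasurable,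
      (measurable_pi_lambda _ ha).aemeasurable, hstat t⟩
  have h0 := hpath.comp (measurable_pi_apply 0)
  simp only [Function.comp_def, zero_add] at h0
  exact h0

lemma prod_exp_div_condExp_exp_le {Ω ι : Type*} {m0 : MeasurableSpace Ω} {μ : Measure Ω}
    [IsFiniteMeasure μ] {s : Finset ι} {a : ι → Ω → ℝ} {ℱ : ι → MeasurableSpace Ω}
    (hℱ : ∀ t ∈ s, ℱ t ≤ m0) (ha : ∀ t ∈ s, Integrable (a t) μ)
    (hea : ∀ t ∈ s, Integrable (fun ω => exp (a t ω)) μ) :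
    ∀ᵐ ω ∂μ, 0 ≤ ∏ t ∈ s, exp (a t ω) / μ[fun ω' => exp (a t ω')|ℱ t] ω ∧
      ∏ t ∈ s, exp (a t ω) / μ[fun ω' => exp (a t ω')|ℱ t] ω ≤
        exp (∑ t ∈ s, (|a t ω| + μ[fun ω' => |a t ω'| | ℱ t] ω)) := by
  have hfactor : ∀ᵐ ω ∂μ, ∀ t ∈ s, 0 < μ[fun ω' => exp (a t ω')|ℱ t] ω ∧
      exp (a t ω) / μ[fun ω' => exp (a t ω')|ℱ t] ω ≤
        exp (|a t ω| + μ[fun ω' => |a t ω'| | ℱ t] ω) := by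
    refine (eventually_all_finset s).2 fun t ht => ?_
    filter_upwards [exp_neg_condExp_abs_le_condExp_exp (hℱ t ht) (ha t ht) (hea t ht)] with ω hω
    have hpos := (exp_pos _).trans_le hω
    refine ⟨hpos, (div_le_iff₀ hpos).2 ?_⟩
    calc exp (a t ω) ≤ exp (|a t ω| + μ[fun ω' => |a t ω'| | ℱ t] ω) *
          exp (-μ[fun ω' => |a t ω'| | ℱ t] ω) := by
          rw [← exp_add, add_neg_cancel_right]; exact exp_le_exp.2 (le_abs_self _)
      _ ≤ _ := by gcongr
  filter_upwards [hfactor] with ω hω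
  refine ⟨prod_nonneg fun t ht => div_nonneg (exp_nonneg _) (hω t ht).1.le, ?_⟩
  rw [exp_sum]
  exact prod_le_prod (fun t ht => div_nonneg (exp_nonneg _) (hω t ht).1.le) fun t ht => (hω t ht).2

lemma integral_le_of_le_exp_sum {Ω ι : Type*} [MeasurableSpace Ω] {μ : Measure Ω}
    [IsProbabilityMeasure μ] {s : Finset ι} {f : Ω → ℝ} {X : ι → Ω → ℝ} {B : ℝ} (hB : 1 ≤ B)
    (hf : ∀ᵐ ω ∂μ, 0 ≤ f ω ∧ f ω ≤ exp (∑ t ∈ s, X t ω))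
    (hX : ∀ t ∈ s, Integrable (fun ω => exp (#s * X t ω)) μ)
    (hXB : ∀ t ∈ s, ∫ ω, exp (#s * X t ω) ∂μ ≤ B) :
    ∫ ω, f ω ∂μ ≤ B := by
  rcases s.eq_empty_or_nonempty with rfl | hs
  · refine (integral_mono_of_nonneg (hf.mono fun ω h => h.1) (integrable_const 1)
      (hf.mono fun ω h => ?_)).trans ?_
    · simpa using h.2
    · simpa using hB
  have hcard : (0 : ℝ) < #s := by exact_mod_cast hs.card_pos
  have hsum : Integrable (fun ω => ∑ t ∈ s, (1 / (#s : ℝ)) * exp (#s * X t ω)) μ :=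
    integrable_finsetSum _ fun t ht => (hX t ht).const_mul _
  calc ∫ ω, f ω ∂μ ≤ ∫ ω, ∑ t ∈ s, (1 / (#s : ℝ)) * exp (#s * X t ω) ∂μ :=
        integral_mono_of_nonneg (hf.mono fun ω h => h.1) hsum
          (hf.mono fun ω h => h.2.trans (exp_sum_le_sum_exp_card_mul hs _))
    _ = ∑ t ∈ s, (1 / (#s : ℝ)) * ∫ ω, exp (#s * X t ω) ∂μ := by
        rw [integral_finsetSum _ fun t ht => (hX t ht).const_mul _]
        simp only [integral_const_mul]
    _ ≤ ∑ _t ∈ s, (1 / (#s : ℝ)) * B := sum_le_sum fun t ht => by gcongr; exact hXB t ht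
    _ = B := by rw [sum_const, nsmul_eq_mul]; field_simp

lemma integral_rpow_prod_exp_div_condExp_exp_le {Ω ι : Type*} {m0 : MeasurableSpace Ω}
    {μ : Measure Ω} [IsProbabilityMeasure μ] {s : Finset ι} {a : ι → Ω → ℝ}
    {ℱ : ι → MeasurableSpace Ω} {p B : ℝ} (hℱ : ∀ t ∈ s, ℱ t ≤ m0)
    (ha : ∀ t ∈ s, Integrable (a t) μ) (hea : ∀ t ∈ s, Integrable (fun ω => exp (a t ω)) μ)
    (hp : 0 ≤ p) (hB : 1 ≤ B)
    (hmom : ∀ t ∈ s, Integrable (fun ω => exp (2 * (#s * p) * |a t ω|)) μ)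
    (hmomB : ∀ t ∈ s, ∫ ω, exp (2 * (#s * p) * |a t ω|) ∂μ ≤ B) :
    ∫ ω, (∏ t ∈ s, exp (a t ω) / μ[fun ω' => exp (a t ω')|ℱ t] ω) ^ p ∂μ ≤ B := by
  refine integral_le_of_le_exp_sum (s := s)
    (X := fun t ω => p * (|a t ω| + μ[fun ω' => |a t ω'| | ℱ t] ω))
    hB ?_ (fun t ht => ?_) (fun t ht => ?_)
  · filter_upwards [prod_exp_div_condExp_exp_le hℱ ha hea] with ω ⟨h0, hle⟩
    rw [← mul_sum, mul_comm, exp_mul]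
    exact ⟨rpow_nonneg h0 p, rpow_le_rpow h0 hle hp⟩
  · simp_rw [← mul_assoc]
    exact integrable_exp_mul_add_condExp (hℱ t ht) _ (ha t ht).abs (hmom t ht)
  · simp_rw [← mul_assoc]
    exact (integral_exp_mul_add_condExp_le (hℱ t ht) _ (ha t ht).abs (hmom t ht)).trans
      (hmomB t ht)

theorem stmt2_general {Ω : Type*} [m0 : MeasurableSpace Ω] (μ : Measure Ω) [IsProbabilityMeasure μ]
    (a : ℕ → Ω → ℝ) (hameas : ∀ t, Measurable (a t))
    -- strict stationarity of the sequence
    (hstat : ∀ t : ℕ, Measure.map (fun ω => (fun k => a (k + t) ω : ℕ → ℝ)) μ =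
      Measure.map (fun ω => (fun k => a k ω : ℕ → ℝ)) μ)
    (r : ℝ) (hr : 1 < r)
    (hfin : orliczNorm μ r (a 0) ∈ {c : ℝ | 0 < c ∧ ∫ ω, Real.exp ((|a 0 ω| / c) ^ r) ∂μ ≤ 2})
    (ℱ : ℕ → MeasurableSpace Ω) (hℱ : ∀ t, ℱ t ≤ m0)
    (M : ℕ → Ω → ℝ)
    (hM : ∀ n ω, M n ω = ∏ t ∈ Finset.Icc 1 n,
      Real.exp (a t ω) / (μ[fun ω' => Real.exp (a t ω')|ℱ t]) ω)
    (p b : ℝ) (hp : 1 < p) (hb : 1 < b) (n : ℕ) :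
    (∫ ω, (M n ω) ^ p ∂μ) ^ (1 / p) ≤
      (Real.exp ((4 * p * n * orliczNorm μ r (a 0)) ^ (r / (r - 1)) * b ^ (1 / (r - 1))) +
        (b / (b - 1)) * (2 : ℝ) ^ (1 / b)) ^ (1 / p) := by
  have hlaw (t : ℕ) (κ : ℝ) := (identDistrib_of_map_shift_eq hameas hstat t).comp
    (u := fun x => exp (κ * |x|)) (by fun_prop)
  have hmom (t : ℕ) {κ : ℝ} (hκ : 0 ≤ κ) : Integrable (fun ω => exp (κ * |a t ω|)) μ :=
    (hlaw t κ).integrable_iff.2 (integrable_exp_mul_abs_of_mem_orliczNorm (hameas 0) hκ hr hfin)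
  have hmomB (t : ℕ) {κ : ℝ} (hκ : 0 ≤ κ) :
      ∫ ω, exp (κ * |a t ω|) ∂μ ≤ 2 * exp ((κ * orliczNorm μ r (a 0)) ^ (r / (r - 1))) :=
    (hlaw t κ).integral_eq.trans_le
      (integral_exp_mul_abs_le_of_mem_orliczNorm (hameas 0) hκ hr hfin)
  have hexp_abs (t : ℕ) : Integrable (fun ω => exp |a t ω|) μ := by
    simpa using hmom t zero_le_one
  have ha (t : ℕ) (_ : t ∈ Icc 1 n) :=
    integrable_of_integrable_exp_abs (hameas t).aestronglyMeasurable (hexp_abs t)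
  have hea (t : ℕ) (_ : t ∈ Icc 1 n) :=
    integrable_exp_of_integrable_exp_abs (hameas t).aestronglyMeasurable (hexp_abs t)
  have hκ : 0 ≤ 2 * (n * p) := by positivity
  have hc : 0 < orliczNorm μ r (a 0) := hfin.1
  have hq : 1 ≤ b / (b - 1) * 2 ^ (1 / b) :=
    one_le_mul_of_one_le_of_one_le ((one_le_div (by linarith)).2 (by linarith))
      (one_le_rpow one_le_two (by positivity))
  simp_rw [hM]
  refine rpow_le_rpow (integral_nonneg_of_ae ((prod_exp_div_condExp_exp_le
    (fun t _ => hℱ t) ha hea).mono fun ω h => rpow_nonneg h.1 p)) ?_ (by positivity)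
  calc _ ≤ 2 * exp ((2 * (n * p) * orliczNorm μ r (a 0)) ^ (r / (r - 1))) :=
        integral_rpow_prod_exp_div_condExp_exp_le (fun t _ => hℱ t) ha hea (by linarith)
          (one_le_two.trans (le_mul_of_one_le_right zero_le_two (one_le_exp (by positivity))))
          (fun t _ => by simpa using hmom t hκ) (fun t _ => by simpa using hmomB t hκ)
    _ ≤ _ := by
      rw [show 4 * p * n * orliczNorm μ r (a 0) = 2 * (2 * (n * p) * orliczNorm μ r (a 0)) by ring]
      exact two_mul_exp_rpow_le (by positivity) hr hb.le hq

/-- Moment bound for a product of conditionally normalized exponential tilts of a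
strictly stationary sub-Weibull (order `r > 1`) sequence:
`E[M_n^p]^{1/p} ≤ (exp((4pn‖a‖_{φ_r})^{r/(r−1)} b^{1/(r−1)}) + (b/(b−1))·2^{1/b})^{1/p}`. -/
theorem stmt2 {Ω : Type*} [m0 : MeasurableSpace Ω] (μ : Measure Ω) [IsProbabilityMeasure μ]
    (a : ℕ → Ω → ℝ) (hameas : ∀ t, Measurable (a t))
    -- strict stationarity of the sequence
    (hstat : ∀ t : ℕ, Measure.map (fun ω => (fun k => a (k + t) ω : ℕ → ℝ)) μ =
      Measure.map (fun ω => (fun k => a k ω : ℕ → ℝ)) μ)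
    (r : ℝ) (hr : 1 < r)
    (hfin : orliczNorm μ r (a 0) ∈ {c : ℝ | 0 < c ∧ ∫ ω, Real.exp ((|a 0 ω| / c) ^ r) ∂μ ≤ 2})
    (ℱ : ℕ → MeasurableSpace Ω) (hℱ : ∀ t, ℱ t ≤ m0)
    (hint : ∀ t, Integrable (fun ω => Real.exp (a t ω)) μ)
    (M : ℕ → Ω → ℝ)
    (hM : ∀ n ω, M n ω = ∏ t ∈ Finset.Icc 1 n,
      Real.exp (a t ω) / (μ[fun ω' => Real.exp (a t ω')|ℱ t]) ω)
    (p b : ℝ) (hp : 1 < p) (hb : 1 < b) (n : ℕ) :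
    (∫ ω, (M n ω) ^ p ∂μ) ^ (1 / p) ≤
      (Real.exp ((4 * p * n * orliczNorm μ r (a 0)) ^ (r / (r - 1)) * b ^ (1 / (r - 1))) +
        (b / (b - 1)) * (2 : ℝ) ^ (1 / b)) ^ (1 / p) :=
  stmt2_general (m0 := m0) μ a hameas hstat r hr hfin ℱ hℱ M hM p b hp hb n
end

section
/- Let ℰ be an ordered Banach function space and T : ℰ → ℰ a convex operator, meaning T(τf + (1−τ)g) ≤ τTf + (1−τ)Tg for all f, g ∈ ℰ and τ ∈ [0,1]. Suppose at each fixed point v of T there exists a monotone bounded linear subgradient D_v (i.e., Tg − Tv ≥ D_v(g − v) for all g) with spectral radius ρ(D_v; ℰ) < 1. Then T has at most one fixed point in ℰ. -/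
/-!
At a fixed point `v`, the subgradient inequality evaluated at another fixed point `v'` reads
`(1 - D) (v' - v) ≥ 0`, so it suffices that `(1 - D)⁻¹` is a positive operator. Only the real
spectrum of `D` is controlled, so the Neumann series of `D` need not converge; instead, the
resolvent `(c - D)⁻¹` exists for all `c ≥ 1`, is positive for `c > ‖D‖` by the Neumann series,
and positivity propagates down to `c = 1` by continuous induction: for `μ` slightly below `c`,
`(μ - D)⁻¹` is the Neumann series of `(c - μ) (c - D)⁻¹` applied after `(c - D)⁻¹`.
Hence `v ≤ v'`, and `v = v'` by symmetry.
-/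

open Filter Topology Set spectrum

theorem nonneg_of_two_pow_nsmul_nonneg {α : Type*} [Lattice α] [AddCommGroup α]
    [IsOrderedAddMonoid α] {z : α} : ∀ n : ℕ, 0 ≤ 2 ^ n • z → 0 ≤ z
  | 0, h => by simpa using h
  | n + 1, h => nsmul_two_semiclosed <| nonneg_of_two_pow_nsmul_nonneg n <| by
      rwa [← mul_nsmul, ← pow_succ']

theorem dyadic_smul_nonneg {E : Type*} [Lattice E] [AddCommGroup E] [IsOrderedAddMonoid E]
    [Module ℝ E] {y : E} (hy : 0 ≤ y) (m n : ℕ) : 0 ≤ ((m : ℝ) / 2 ^ n) • y := by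
  refine nonneg_of_two_pow_nsmul_nonneg n ?_
  rw [← Nat.cast_smul_eq_nsmul ℝ, smul_smul, Nat.cast_pow, Nat.cast_ofNat,
    mul_div_cancel₀ _ (by positivity), Nat.cast_smul_eq_nsmul]
  exact nsmul_nonneg hy m

/-- The positive cone is closed and contains the dyadic multiples of `y`. -/
theorem real_smul_nonneg {E : Type*} [NormedAddCommGroup E] [Lattice E] [HasSolidNorm E]
    [IsOrderedAddMonoid E] [NormedSpace ℝ E] {t : ℝ} (ht : 0 ≤ t) {y : E} (hy : 0 ≤ y) :
    0 ≤ t • y := by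
  have hdyadic : Tendsto (fun n : ℕ ↦ ((⌊t * 2 ^ n⌋₊ : ℝ) / 2 ^ n) • y) atTop (𝓝 (t • y)) :=
    ((tendsto_nat_floor_mul_div_atTop ht).comp
      (tendsto_pow_atTop_atTop_of_one_lt one_lt_two)).smul_const y
  exact ge_of_tendsto' hdyadic fun n ↦ dyadic_smul_nonneg hy _ n

section

variable {E : Type*} [NormedAddCommGroup E] [Lattice E] [NormedSpace ℝ E]

def PreservesNonneg (A : E →L[ℝ] E) : Prop := ∀ x, 0 ≤ x → 0 ≤ A x

namespace PreservesNonneg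

theorem one : PreservesNonneg (1 : E →L[ℝ] E) := fun _ hx ↦ hx

theorem mul {A B : E →L[ℝ] E} (hA : PreservesNonneg A) (hB : PreservesNonneg B) :
    PreservesNonneg (A * B) := fun x hx ↦ hA _ (hB x hx)

theorem pow {A : E →L[ℝ] E} (hA : PreservesNonneg A) : ∀ n : ℕ, PreservesNonneg (A ^ n)
  | 0 => by simpa using one
  | n + 1 => by rw [pow_succ]; exact (hA.pow n).mul hA

variable [HasSolidNorm E] [IsOrderedAddMonoid E]

theorem smul {A : E →L[ℝ] E} (hA : PreservesNonneg A) {t : ℝ} (ht : 0 ≤ t) :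
    PreservesNonneg (t • A) := fun x hx ↦ real_smul_nonneg ht (hA x hx)

theorem isClosed_setOf : IsClosed {A : E →L[ℝ] E | PreservesNonneg A} := by
  simp only [PreservesNonneg, ofPred_forall]
  exact isClosed_iInter fun x ↦ isClosed_iInter fun _ ↦
    isClosed_le continuous_const ((ContinuousLinearMap.apply ℝ E x).continuous)

variable [CompleteSpace E]

theorem inverse_one_sub {s : E →L[ℝ] E} (hs : PreservesNonneg s) (h : ‖s‖ < 1) :
    PreservesNonneg (Ring.inverse (1 - s)) := by
  intro x hx
  rw [← geom_series_eq_inverse s h]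
  change 0 ≤ ContinuousLinearMap.apply ℝ E x (∑' n, s ^ n)
  rw [(ContinuousLinearMap.apply ℝ E x).map_tsum (summable_geometric_of_norm_lt_one h)]
  exact tsum_nonneg fun n ↦ hs.pow n x hx

/-- `u - v = u (1 - u⁻¹ v)`, and the Neumann series of `u⁻¹ v` preserves positivity. -/
theorem inverse_unit_sub {u : (E →L[ℝ] E)ˣ} {v : E →L[ℝ] E}
    (hu : PreservesNonneg (↑u⁻¹ : E →L[ℝ] E)) (hv : PreservesNonneg ((↑u⁻¹ : E →L[ℝ] E) * v))
    (h : ‖(↑u⁻¹ : E →L[ℝ] E) * v‖ < 1) :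
    PreservesNonneg (Ring.inverse ((u : E →L[ℝ] E) - v)) := by
  have hfactor : (↑u - v : E →L[ℝ] E) = ↑(u * Units.oneSub _ h) := by
    rw [Units.val_mul, Units.val_oneSub, mul_sub, mul_one, ← mul_assoc, Units.mul_inv, one_mul]
  rw [hfactor, Ring.inverse_unit, mul_inv_rev, Units.val_mul, ← NormedRing.inverse_one_sub]
  exact (hv.inverse_one_sub h).mul hu

theorem resolvent_of_norm_lt {D : E →L[ℝ] E} (hD : PreservesNonneg D) {c : ℝ} (hc : ‖D‖ < c) :
    PreservesNonneg (resolvent D c) := by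
  have hc0 : 0 < c := (norm_nonneg D).trans_lt hc
  let u : (E →L[ℝ] E)ˣ :=
    Units.map (algebraMap ℝ (E →L[ℝ] E)).toMonoidHom (Units.mk0 c hc0.ne')
  have hu : (↑u⁻¹ : E →L[ℝ] E) = c⁻¹ • 1 := by
    simp [u, Algebra.algebraMap_eq_smul_one]
  refine inverse_unit_sub (u := u) ?_ ?_ ?_
  · rw [hu]; exact one.smul (inv_nonneg.2 hc0.le)
  · rw [hu, smul_one_mul]; exact hD.smul (inv_nonneg.2 hc0.le)
  · rw [hu, smul_one_mul, norm_smul, Real.norm_eq_abs, abs_inv,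
      abs_of_pos hc0, inv_mul_lt_iff₀ hc0, mul_one]
    exact hc

theorem resolvent_of_le {D : E →L[ℝ] E} {c μ : ℝ} (hc : c ∈ resolventSet ℝ D)
    (hR : PreservesNonneg (resolvent D c)) (hμ : μ ≤ c) (h : (c - μ) * ‖resolvent D c‖ < 1) :
    PreservesNonneg (resolvent D μ) := by
  have hc' : IsUnit (algebraMap ℝ (E →L[ℝ] E) c - D) := hc
  have hu : (↑hc'.unit⁻¹ : E →L[ℝ] E) = resolvent D c := (resolvent_eq hc).symm
  have hv : (↑hc'.unit⁻¹ : E →L[ℝ] E) * algebraMap ℝ _ (c - μ) = (c - μ) • resolvent D c := by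
    rw [hu, ← Algebra.commutes, ← Algebra.smul_def]
  have hsub : (hc'.unit : E →L[ℝ] E) - algebraMap ℝ _ (c - μ) = algebraMap ℝ _ μ - D := by
    rw [IsUnit.unit_spec, map_sub]; abel
  rw [resolvent, ← hsub]
  refine inverse_unit_sub (hu ▸ hR) (hv ▸ hR.smul (sub_nonneg.2 hμ)) ?_
  rwa [hv, norm_smul, Real.norm_eq_abs, abs_of_nonneg (sub_nonneg.2 hμ)]

/-- Continuous induction downwards from a point beyond `‖D‖`: positivity of the resolvent
propagates a uniform distance below any point of the resolvent set, and is a closed condition. -/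
theorem resolvent_of_Ici_subset {D : E →L[ℝ] E} (hD : PreservesNonneg D) {a : ℝ}
    (ha : Ici a ⊆ resolventSet ℝ D) : PreservesNonneg (resolvent D a) := by
  set b := max a (‖D‖ + 1)
  have hcont : ContinuousOn (resolvent D) (Icc a b) := fun c hc ↦
    (hasDerivAt_resolvent_const_left (ha hc.1)).continuousAt.continuousWithinAt
  refine IsClosed.mem_of_ge_of_forall_exists_lt (s := {c | PreservesNonneg (resolvent D c)})
    (b := b) ?_ ?_ (le_max_left _ _) ?_
  · rw [inter_comm]
    exact hcont.preimage_isClosed_of_isClosed isClosed_Icc isClosed_setOf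
  · exact hD.resolvent_of_norm_lt (by linarith [le_max_right a (‖D‖ + 1)])
  · rintro x ⟨hx, hax, -⟩
    set δ := (‖resolvent D x‖ + 1)⁻¹
    have hδ : 0 < δ := by positivity
    have hstep : (x - max a (x - δ)) * ‖resolvent D x‖ < 1 :=
      calc (x - max a (x - δ)) * ‖resolvent D x‖ ≤ δ * ‖resolvent D x‖ := by
            gcongr; linarith [le_max_right a (x - δ)]
        _ < 1 := by rw [inv_mul_lt_iff₀ (by positivity)]; linarith
    exact ⟨max a (x - δ),
      resolvent_of_le (ha hax.le) hx (max_le hax.le (by linarith)) hstep,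
      le_max_left _ _, max_lt hax (by linarith)⟩

theorem nonneg_of_apply_le {D : E →L[ℝ] E} (hD : PreservesNonneg D)
    (hρ : spectralRadius ℝ D < 1) {x : E} (hx : D x ≤ x) : 0 ≤ x := by
  have hres : Ici 1 ⊆ resolventSet ℝ D := fun c hc ↦
    mem_resolventSet_of_spectralRadius_lt <| hρ.trans_le <| by
      rw [← ENNReal.coe_one, ENNReal.coe_le_coe, ← NNReal.coe_le_coe, coe_nnnorm,
        NNReal.coe_one, Real.norm_eq_abs]
      exact hc.trans (le_abs_self c)
  have hinv : resolvent D (1 : ℝ) * (algebraMap ℝ (E →L[ℝ] E) 1 - D) = 1 :=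
    Ring.inverse_mul_cancel _ (hres self_mem_Ici)
  have hx' : resolvent D (1 : ℝ) (x - D x) = x := by
    simpa using congrArg (fun A : E →L[ℝ] E ↦ A x) hinv
  exact hx' ▸ hD.resolvent_of_Ici_subset hres _ (sub_nonneg.2 hx)

end PreservesNonneg

end

theorem stmt4_general {E : Type*} [NormedAddCommGroup E] [Lattice E] [HasSolidNorm E]
    [IsOrderedAddMonoid E] [NormedSpace ℝ E] [CompleteSpace E]
    (T : E → E)
    (hsub : ∀ v : E, T v = v → ∃ D : E →L[ℝ] E,
      (∀ f : E, 0 ≤ f → 0 ≤ D f) ∧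
      (∀ g : E, D (g - v) ≤ T g - T v) ∧
      spectralRadius ℝ D < 1) :
    ∀ v v' : E, T v = v → T v' = v' → v = v' := by
  have hle : ∀ v v' : E, T v = v → T v' = v' → v ≤ v' := by
    intro v v' hv hv'
    obtain ⟨D, hD, hDsub, hρ⟩ := hsub v hv
    have hsub' : D (v' - v) ≤ v' - v := by simpa only [hv, hv'] using hDsub v'
    exact sub_nonneg.1 (PreservesNonneg.nonneg_of_apply_le hD hρ hsub')
  exact fun v v' hv hv' ↦ (hle v v' hv hv').antisymm (hle v' v hv' hv)

/-- Uniqueness of fixed points of a convex operator on an ordered Banach function space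
(formalized as a Banach lattice): if at each fixed point `v` of `T` there is a monotone
bounded linear subgradient `D_v` (`T g − T v ≥ D_v (g − v)` for all `g`) with spectral
radius `< 1`, then `T` has at most one fixed point. -/
theorem stmt4 {E : Type*} [NormedAddCommGroup E] [Lattice E] [HasSolidNorm E]
    [IsOrderedAddMonoid E] [NormedSpace ℝ E] [CompleteSpace E]
    (T : E → E)
    (hconv : ∀ f g : E, ∀ τ : ℝ, 0 ≤ τ → τ ≤ 1 →
      T (τ • f + (1 - τ) • g) ≤ τ • T f + (1 - τ) • T g)
    (hsub : ∀ v : E, T v = v → ∃ D : E →L[ℝ] E,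
      (∀ f : E, 0 ≤ f → 0 ≤ D f) ∧
      (∀ g : E, D (g - v) ≤ T g - T v) ∧
      spectralRadius ℝ D < 1) :
    ∀ v v' : E, T v = v → T v' = v' → v = v' :=
  stmt4_general T hsub
end

section
/- Suppose u(X_t, X_{t+1}) = X_t where X is an autoregressive gamma process with parameters (c₁, c₂, c₃), c₁, c₂, c₃ > 0, c₁c₂ < 1, whose log conditional moment generating function is log E^Q[e^{sX_{t+1}}|X_t = x] = c₁c₂sx/(1 − sc₁) − c₃ log(1 − sc₁) for s < 1/c₁. If an affine function v(x) = a + bx satisfies Tv = v with Tf(x) = β log E^Q[e^{f(X_{t+1}) + αX_t}|X_t = x], then b solves the quadratic c₁b² − (1 − βc₁(c₂ − α))b + αβ = 0, i.e., b = (1 − βc₁(c₂−α) ± √((1 − βc₁(c₂−α))² − 4αβc₁))/(2c₁), and a = −βc₃ log(1 − bc₁)/(1 − β). In particular, when the discriminant is strictly positive and both roots satisfy 1 − bc₁ > 0, there exist two distinct affine fixed points. -/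
open MeasureTheory

/-!
Multiplying out the exponential, `Tv(x) = β (a + α x + K(b, x))` with `K` the ARG cumulant
generating function, provided the integral is not the junk value `0`; this is excluded because
`K(s, x)` has the sign of `s`. As `K(b, x)` is affine in `x`, the identity `Tv = v` on `x ≥ 0` is
equivalent to matching the coefficient of `x` (the quadratic in `b`) and the constant term (which
determines `a`). Each of the two roots of the quadratic then gives a fixed point.
-/

/-- `K(s, x) = log E[exp (s X_{t+1}) | X_t = x]` for the ARG(`c₁`, `c₂`, `c₃`) process. -/
noncomputable def argLogMgf (c₁ c₂ c₃ x s : ℝ) : ℝ :=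
  c₁ * c₂ * s * x / (1 - s * c₁) - c₃ * Real.log (1 - s * c₁)

section argLogMgf

variable {c₁ c₂ c₃ x s : ℝ}

theorem argLogMgf_pos (h₁ : 0 < c₁) (h₁₂ : 0 ≤ c₁ * c₂) (h₃ : 0 < c₃) (hx : 0 ≤ x)
    (hs : 0 < s) (hsc : s * c₁ < 1) : 0 < argLogMgf c₁ c₂ c₃ x s := by
  have hlin : 0 ≤ c₁ * c₂ * s * x / (1 - s * c₁) := by
    apply div_nonneg _ (by linarith)
    exact mul_nonneg (mul_nonneg h₁₂ hs.le) hx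
  have hlog : Real.log (1 - s * c₁) < 0 := Real.log_neg (by linarith) (by nlinarith)
  unfold argLogMgf
  nlinarith

theorem argLogMgf_neg (h₁ : 0 < c₁) (h₁₂ : 0 ≤ c₁ * c₂) (h₃ : 0 < c₃) (hx : 0 ≤ x)
    (hs : s < 0) : argLogMgf c₁ c₂ c₃ x s < 0 := by
  have hden : 1 < 1 - s * c₁ := by nlinarith
  have hlin : c₁ * c₂ * s * x / (1 - s * c₁) ≤ 0 := by
    apply div_nonpos_of_nonpos_of_nonneg _ (by linarith)
    exact mul_nonpos_of_nonpos_of_nonneg (mul_nonpos_of_nonneg_of_nonpos h₁₂ hs.le) hx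
  have hlog : 0 < Real.log (1 - s * c₁) := Real.log_pos hden
  unfold argLogMgf
  nlinarith

theorem argLogMgf_ne_zero (h₁ : 0 < c₁) (h₁₂ : 0 ≤ c₁ * c₂) (h₃ : 0 < c₃) (hx : 0 ≤ x)
    (hs : s ≠ 0) (hsc : s * c₁ < 1) : argLogMgf c₁ c₂ c₃ x s ≠ 0 := by
  rcases hs.lt_or_gt with hs | hs
  · exact (argLogMgf_neg h₁ h₁₂ h₃ hx hs).ne
  · exact (argLogMgf_pos h₁ h₁₂ h₃ hx hs hsc).ne'

end argLogMgf

/-- If `log E[exp (s Y)]` does not vanish at `s ≠ 0`, then `E[exp (s Y)]` is not the junk value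
`0` of a non-integrable integrand. -/
theorem integral_exp_mul_ne_zero {μ : Measure ℝ} [IsProbabilityMeasure μ] {s : ℝ}
    (h : s ≠ 0 → Real.log (∫ y, Real.exp (s * y) ∂μ) ≠ 0) :
    ∫ y, Real.exp (s * y) ∂μ ≠ 0 := by
  rcases eq_or_ne s 0 with rfl | hs
  · simp
  · intro h0
    exact h hs (by rw [h0, Real.log_zero])

theorem log_integral_exp_affine {μ : Measure ℝ} {a b c : ℝ}
    (hI : ∫ y, Real.exp (b * y) ∂μ ≠ 0) :
    Real.log (∫ y, Real.exp ((a + b * y) + c) ∂μ) =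
      a + c + Real.log (∫ y, Real.exp (b * y) ∂μ) := by
  have hsplit : ∀ y, Real.exp ((a + b * y) + c) = Real.exp (a + c) * Real.exp (b * y) := by
    intro y
    rw [← Real.exp_add]
    ring_nf
  simp_rw [hsplit]
  rw [integral_const_mul, Real.log_mul (Real.exp_ne_zero _) hI, Real.log_exp]

theorem affine_fixedPoint_iff {c₁ c₂ c₃ α β a b : ℝ} (hβ : β ≠ 1) (hb : b * c₁ < 1) :
    (∀ x ≥ (0 : ℝ), β * (a + α * x + argLogMgf c₁ c₂ c₃ x b) = a + b * x) ↔
      c₁ * b ^ 2 - (1 - β * c₁ * (c₂ - α)) * b + α * β = 0 ∧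
        a = -(β * c₃ * Real.log (1 - b * c₁)) / (1 - β) := by
  have hβ' : 1 - β ≠ 0 := sub_ne_zero.mpr hβ.symm
  unfold argLogMgf
  set D := 1 - b * c₁ with hDdef
  have hD : D ≠ 0 := by linarith
  constructor
  · intro hfix
    have h0 := hfix 0 le_rfl
    have h1 := hfix 1 zero_le_one
    simp only [mul_zero, mul_one, zero_div, add_zero, zero_sub] at h0 h1
    field_simp at h1
    constructor
    · linear_combination h1 - D * h0 - (β * α - b) * hDdef
    · rw [eq_div_iff hβ']
      linear_combination -h0
  · rintro ⟨hq, rfl⟩ x -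
    field_simp
    linear_combination (1 - β) * x * hq

theorem stmt10_general (c₁ c₂ c₃ α β : ℝ)
    (h1 : 0 < c₁) (h2 : 0 < c₂) (h3 : 0 < c₃)
    (hβ : β ∈ Set.Ioo (0 : ℝ) 1)
    (Q : ℝ → Measure ℝ) (hQ : ∀ x, IsProbabilityMeasure (Q x))
    -- ARG(c₁,c₂,c₃) conditional log moment generating function
    (hmgf : ∀ x ≥ (0 : ℝ), ∀ s : ℝ, s * c₁ < 1 →
      Real.log (∫ y, Real.exp (s * y) ∂(Q x)) =
        c₁ * c₂ * s * x / (1 - s * c₁) - c₃ * Real.log (1 - s * c₁)) :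
    -- necessity: affine fixed points solve the quadratic, and a is determined
    (∀ a b : ℝ, b * c₁ < 1 →
      (∀ x ≥ (0 : ℝ),
        β * Real.log (∫ y, Real.exp ((a + b * y) + α * x) ∂(Q x)) = a + b * x) →
      c₁ * b ^ 2 - (1 - β * c₁ * (c₂ - α)) * b + α * β = 0 ∧
        a = -(β * c₃ * Real.log (1 - b * c₁)) / (1 - β))
    ∧
    -- existence of two distinct affine fixed points
    (0 < (1 - β * c₁ * (c₂ - α)) ^ 2 - 4 * α * β * c₁ →
      ∀ bp bm : ℝ,
        bp = (1 - β * c₁ * (c₂ - α) +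
          Real.sqrt ((1 - β * c₁ * (c₂ - α)) ^ 2 - 4 * α * β * c₁)) / (2 * c₁) →
        bm = (1 - β * c₁ * (c₂ - α) -
          Real.sqrt ((1 - β * c₁ * (c₂ - α)) ^ 2 - 4 * α * β * c₁)) / (2 * c₁) →
        bp * c₁ < 1 → bm * c₁ < 1 →
        bp ≠ bm ∧
        (∀ x ≥ (0 : ℝ),
          β * Real.log (∫ y, Real.exp
            ((-(β * c₃ * Real.log (1 - bp * c₁)) / (1 - β) + bp * y) + α * x) ∂(Q x)) =
          -(β * c₃ * Real.log (1 - bp * c₁)) / (1 - β) + bp * x) ∧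
        (∀ x ≥ (0 : ℝ),
          β * Real.log (∫ y, Real.exp
            ((-(β * c₃ * Real.log (1 - bm * c₁)) / (1 - β) + bm * y) + α * x) ∂(Q x)) =
          -(β * c₃ * Real.log (1 - bm * c₁)) / (1 - β) + bm * x)) := by
  have hT : ∀ a b, b * c₁ < 1 → ∀ x ≥ (0 : ℝ),
      β * Real.log (∫ y, Real.exp ((a + b * y) + α * x) ∂(Q x)) =
        β * (a + α * x + argLogMgf c₁ c₂ c₃ x b) := fun a b hb x hx => by
    have hI := @integral_exp_mul_ne_zero _ (hQ x) b fun hb0 => by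
      rw [hmgf x hx b hb]
      exact argLogMgf_ne_zero h1 (by positivity) h3 hx hb0 hb
    rw [log_integral_exp_affine hI, hmgf x hx b hb, argLogMgf]
  have hfixed : ∀ a b, b * c₁ < 1 →
      ((∀ x ≥ (0 : ℝ), β * Real.log (∫ y, Real.exp ((a + b * y) + α * x) ∂(Q x)) = a + b * x) ↔
        c₁ * b ^ 2 - (1 - β * c₁ * (c₂ - α)) * b + α * β = 0 ∧
          a = -(β * c₃ * Real.log (1 - b * c₁)) / (1 - β)) := fun a b hb =>
    (forall₂_congr fun x hx => by rw [hT a b hb x hx]).trans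
      (affine_fixedPoint_iff hβ.2.ne hb)
  refine ⟨fun a b hb => (hfixed a b hb).1, ?_⟩
  intro hdisc bp bm hbp hbm hlp hlm
  set S := 1 - β * c₁ * (c₂ - α)
  have hroots := quadratic_eq_zero_iff h1.ne' (b := -S) (c := α * β)
    (s := Real.sqrt (S ^ 2 - 4 * α * β * c₁))
    (by rw [discrim, ← sq, Real.sq_sqrt hdisc.le]; ring)
  have hquad : ∀ b, b = bp ∨ b = bm → c₁ * b ^ 2 - S * b + α * β = 0 := by
    intro b hb
    have := (hroots b).2 (by rw [neg_neg]; rwa [← hbp, ← hbm])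
    linear_combination this
  have hsqrt := Real.sqrt_pos.mpr hdisc
  refine ⟨?_, (hfixed _ bp hlp).2 ⟨hquad bp (.inl rfl), rfl⟩,
    (hfixed _ bm hlm).2 ⟨hquad bm (.inr rfl), rfl⟩⟩
  rw [hbp, hbm]
  exact ((div_lt_div_iff_of_pos_right (by positivity)).mpr (by linarith)).ne'

/-- Affine fixed points of the risk-sensitive recursion for an autoregressive gamma
state process with `u(x,y) = x`. Any affine solution `v(x) = a + bx` (with `bc₁ < 1`)
has `b` solving the quadratic `c₁b² − (1 − βc₁(c₂−α))b + αβ = 0` and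
`a = −βc₃ log(1 − bc₁)/(1−β)`; when the discriminant is strictly positive and both roots
satisfy `1 − bc₁ > 0`, there exist two distinct affine fixed points. -/
theorem stmt10 (c₁ c₂ c₃ α β : ℝ)
    (h1 : 0 < c₁) (h2 : 0 < c₂) (h3 : 0 < c₃) (hcc : c₁ * c₂ < 1)
    (hβ : β ∈ Set.Ioo (0 : ℝ) 1)
    (Q : ℝ → Measure ℝ) (hQ : ∀ x, IsProbabilityMeasure (Q x))
    -- ARG(c₁,c₂,c₃) conditional log moment generating function
    (hmgf : ∀ x ≥ (0 : ℝ), ∀ s : ℝ, s * c₁ < 1 →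
      Real.log (∫ y, Real.exp (s * y) ∂(Q x)) =
        c₁ * c₂ * s * x / (1 - s * c₁) - c₃ * Real.log (1 - s * c₁)) :
    -- necessity: affine fixed points solve the quadratic, and a is determined
    (∀ a b : ℝ, b * c₁ < 1 →
      (∀ x ≥ (0 : ℝ),
        β * Real.log (∫ y, Real.exp ((a + b * y) + α * x) ∂(Q x)) = a + b * x) →
      c₁ * b ^ 2 - (1 - β * c₁ * (c₂ - α)) * b + α * β = 0 ∧
        a = -(β * c₃ * Real.log (1 - b * c₁)) / (1 - β))
    ∧
    -- existence of two distinct affine fixed points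
    (0 < (1 - β * c₁ * (c₂ - α)) ^ 2 - 4 * α * β * c₁ →
      ∀ bp bm : ℝ,
        bp = (1 - β * c₁ * (c₂ - α) +
          Real.sqrt ((1 - β * c₁ * (c₂ - α)) ^ 2 - 4 * α * β * c₁)) / (2 * c₁) →
        bm = (1 - β * c₁ * (c₂ - α) -
          Real.sqrt ((1 - β * c₁ * (c₂ - α)) ^ 2 - 4 * α * β * c₁)) / (2 * c₁) →
        bp * c₁ < 1 → bm * c₁ < 1 →
        bp ≠ bm ∧
        (∀ x ≥ (0 : ℝ),
          β * Real.log (∫ y, Real.exp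
            ((-(β * c₃ * Real.log (1 - bp * c₁)) / (1 - β) + bp * y) + α * x) ∂(Q x)) =
          -(β * c₃ * Real.log (1 - bp * c₁)) / (1 - β) + bp * x) ∧
        (∀ x ≥ (0 : ℝ),
          β * Real.log (∫ y, Real.exp
            ((-(β * c₃ * Real.log (1 - bm * c₁)) / (1 - β) + bm * y) + α * x) ∂(Q x)) =
          -(β * c₃ * Real.log (1 - bm * c₁)) / (1 - β) + bm * x)) :=
  stmt10_general c₁ c₂ c₃ α β h1 h2 h3 hβ Q hQ hmgf
end
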